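/- For every real p > 1 and integer m ≥ 1, the multiple zeta star value with m repeated arguments satisfies ζ*({p}_m) = (1/m) · ∑_{i=0}^{m-1} ζ*({p}_i) · ζ(pm - pi), where ζ*({p}_0) = 1; similarly the multiple zeta value satisfies ζ({p}_m) = ((-1)^{m-1}/m) · ∑_{i=0}^{m-1} (-1)^i ζ({p}_i) · ζ(pm - pi). -/

import Mathlib

/-- Multiple harmonic number (strictly decreasing indices). -/
noncomputable def mh : List ℝ → ℕ → ℝ
  | [], _ => 1
  | s :: t, n => ∑ k ∈ Finset.Icc 1 n, (1 / (k : ℝ) ^ s) * mh t (k - 1)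

/-- Multiple harmonic star number (weakly decreasing indices). -/
noncomputable def mhStar : List ℝ → ℕ → ℝ
  | [], _ => 1
  | s :: t, n => ∑ k ∈ Finset.Icc 1 n, (1 / (k : ℝ) ^ s) * mhStar t k

/-- Multiple zeta value. -/
noncomputable def mzv : List ℝ → ℝ
  | [] => 1
  | s :: t => ∑' k : ℕ, (1 / ((k : ℝ) + 1) ^ s) * mh t k

/-- Multiple zeta star value. -/
noncomputable def mzvStar : List ℝ → ℝ
  | [] => 1
  | s :: t => ∑' k : ℕ, (1 / ((k : ℝ) + 1) ^ s) * mhStar t (k + 1)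

/-- Riemann zeta value (real series). -/
noncomputable def rz (s : ℝ) : ℝ := ∑' n : ℕ, 1 / ((n : ℝ) + 1) ^ s

/-!
Cut off at `n` terms, `ζ({p}_m)` and `ζ*({p}_m)` become the elementary and the complete
homogeneous symmetric functions `e_m`, `h_m` of the numbers `1 / k ^ p` (`1 ≤ k ≤ n`), and
`ζ(p j)` becomes the power sum `P_j`. Newton's identities
`m e_m = ∑_{i<m} (-1)^(m-1-i) e_i P_(m-i)` and `m h_m = ∑_{i<m} h_i P_(m-i)` hold for every `n`,
by induction on `n`, adding one variable at a time; letting `n → ∞` gives the theorem. No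
separate estimate is needed for convergence: by induction on `m`, the identities show that the
truncations of `ζ({p}_m)` and `ζ*({p}_m)` converge, and as all terms are nonnegative, the limits
are the sums of these series.
-/

open Finset Filter Topology

section SymmetricFunctions

variable {R : Type*} [CommSemiring R] (x : ℕ → R)

/- The elementary, complete homogeneous and power-sum symmetric functions of
`x 0, …, x (n - 1)`, built up by their largest variable. -/

def esymmSeq : ℕ → ℕ → R
  | 0, _ => 1
  | m + 1, n => ∑ k ∈ range n, x k * esymmSeq m k

def hsymmSeq : ℕ → ℕ → R
  | 0, _ => 1
  | m + 1, n => ∑ k ∈ range n, x k * hsymmSeq m (k + 1)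

def psumSeq (k n : ℕ) : R := ∑ j ∈ range n, x j ^ k

@[simp] lemma esymmSeq_zero (n : ℕ) : esymmSeq x 0 n = 1 := rfl

@[simp] lemma hsymmSeq_zero (n : ℕ) : hsymmSeq x 0 n = 1 := rfl

lemma esymmSeq_succ_succ (m n : ℕ) :
    esymmSeq x (m + 1) (n + 1) = esymmSeq x (m + 1) n + x n * esymmSeq x m n :=
  sum_range_succ _ n

lemma hsymmSeq_succ_succ (m n : ℕ) :
    hsymmSeq x (m + 1) (n + 1) = hsymmSeq x (m + 1) n + x n * hsymmSeq x m (n + 1) :=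
  sum_range_succ _ n

lemma psumSeq_succ (k n : ℕ) : psumSeq x k (n + 1) = psumSeq x k n + x n ^ k :=
  sum_range_succ _ n

-- The coefficient of `t ^ m` in `H_{n+1}(t) = H_n(t) / (1 - x n * t)`.
lemma sum_antidiagonal_pow_mul_hsymmSeq (m n : ℕ) :
    ∑ ij ∈ antidiagonal m, x n ^ ij.2 * hsymmSeq x ij.1 n = hsymmSeq x m (n + 1) := by
  induction m with
  | zero => simp
  | succ m ih =>
    rw [Nat.sum_antidiagonal_succ', hsymmSeq_succ_succ, ← ih, mul_sum]
    simp only [pow_zero, one_mul, pow_succ]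
    congr 1
    exact sum_congr rfl fun _ _ => by ring

theorem newton_hsymmSeq (n m : ℕ) :
    ((m + 1 : ℕ) : R) * hsymmSeq x (m + 1) n =
      ∑ ij ∈ antidiagonal m, hsymmSeq x ij.1 n * psumSeq x (ij.2 + 1) n := by
  induction n generalizing m with
  | zero => simp [hsymmSeq, psumSeq]
  | succ n ihn =>
    induction m with
    | zero =>
      have h1 := ihn 0
      simp only [Nat.antidiagonal_zero, sum_singleton, hsymmSeq_zero, one_mul] at h1 ⊢
      rw [hsymmSeq_succ_succ, psumSeq_succ, ← h1, hsymmSeq_zero]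
      ring
    | succ M ihm =>
      have shift_hsymm :
          ∑ ij ∈ antidiagonal (M + 1), hsymmSeq x ij.1 (n + 1) * psumSeq x (ij.2 + 1) (n + 1) =
            ∑ ij ∈ antidiagonal (M + 1), hsymmSeq x ij.1 n * psumSeq x (ij.2 + 1) (n + 1) +
              x n * ∑ ij ∈ antidiagonal M,
                hsymmSeq x ij.1 (n + 1) * psumSeq x (ij.2 + 1) (n + 1) := by
        simp only [Nat.sum_antidiagonal_succ, hsymmSeq_zero, hsymmSeq_succ_succ, add_mul,
          sum_add_distrib, mul_sum, mul_assoc, add_assoc]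
      have shift_psum :
          ∑ ij ∈ antidiagonal (M + 1), hsymmSeq x ij.1 n * psumSeq x (ij.2 + 1) (n + 1) =
            ∑ ij ∈ antidiagonal (M + 1), hsymmSeq x ij.1 n * psumSeq x (ij.2 + 1) n +
              x n * ∑ ij ∈ antidiagonal (M + 1), x n ^ ij.2 * hsymmSeq x ij.1 n := by
        simp only [psumSeq_succ, mul_add, sum_add_distrib, mul_sum]
        congr 1
        exact sum_congr rfl fun _ _ => by ring
      rw [shift_hsymm, shift_psum, ← ihn, ← ihm, sum_antidiagonal_pow_mul_hsymmSeq,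
        hsymmSeq_succ_succ x (M + 1)]
      push_cast
      ring

end SymmetricFunctions

section Signed

variable {R : Type*} [CommRing R] (x : ℕ → R)

-- The coefficient of `t ^ m` in `E_{n+1}(-t) / (1 - x n * t) = E_n(-t)`.
lemma sum_antidiagonal_neg_one_pow_mul_esymmSeq (m n : ℕ) :
    ∑ ij ∈ antidiagonal m, (-1) ^ ij.1 * x n ^ ij.2 * esymmSeq x ij.1 (n + 1) =
      (-1) ^ m * esymmSeq x m n := by
  induction m with
  | zero => simp
  | succ m ih =>
    have factor_out :
        ∑ ij ∈ antidiagonal m, (-1) ^ ij.1 * x n ^ (ij.2 + 1) * esymmSeq x ij.1 (n + 1) =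
          x n * ∑ ij ∈ antidiagonal m, (-1) ^ ij.1 * x n ^ ij.2 * esymmSeq x ij.1 (n + 1) := by
      rw [mul_sum]
      exact sum_congr rfl fun _ _ => by ring
    rw [Nat.sum_antidiagonal_succ', factor_out, ih, esymmSeq_succ_succ]
    ring

theorem newton_esymmSeq (n m : ℕ) :
    ∑ ij ∈ antidiagonal m, (-1) ^ ij.1 * esymmSeq x ij.1 n * psumSeq x (ij.2 + 1) n =
      (-1) ^ m * ((m + 1 : ℕ) : R) * esymmSeq x (m + 1) n := by
  induction n generalizing m with
  | zero => simp [esymmSeq, psumSeq]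
  | succ n ihn =>
    have shift_psum :
        ∑ ij ∈ antidiagonal m,
            (-1) ^ ij.1 * esymmSeq x ij.1 (n + 1) * psumSeq x (ij.2 + 1) (n + 1) =
          ∑ ij ∈ antidiagonal m,
              (-1) ^ ij.1 * esymmSeq x ij.1 (n + 1) * psumSeq x (ij.2 + 1) n +
            x n * ∑ ij ∈ antidiagonal m,
              (-1) ^ ij.1 * x n ^ ij.2 * esymmSeq x ij.1 (n + 1) := by
      simp only [psumSeq_succ, mul_add, sum_add_distrib, mul_sum]
      congr 1
      exact sum_congr rfl fun _ _ => by ring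
    rw [shift_psum, sum_antidiagonal_neg_one_pow_mul_esymmSeq]
    cases m with
    | zero =>
      have h0 := ihn 0
      simp only [Nat.antidiagonal_zero, sum_singleton, esymmSeq_zero] at h0 ⊢
      rw [h0, esymmSeq_succ_succ, esymmSeq_zero]
      ring
    | succ M =>
      have shift_esymm :
          ∑ ij ∈ antidiagonal (M + 1),
              (-1) ^ ij.1 * esymmSeq x ij.1 (n + 1) * psumSeq x (ij.2 + 1) n =
            ∑ ij ∈ antidiagonal (M + 1),
                (-1) ^ ij.1 * esymmSeq x ij.1 n * psumSeq x (ij.2 + 1) n -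
              x n * ∑ ij ∈ antidiagonal M,
                (-1) ^ ij.1 * esymmSeq x ij.1 n * psumSeq x (ij.2 + 1) n := by
        simp only [Nat.sum_antidiagonal_succ, esymmSeq_zero, esymmSeq_succ_succ, mul_add, add_mul,
          sum_add_distrib, mul_sum, sub_eq_add_neg, ← sum_neg_distrib, add_assoc]
        congr 2
        exact sum_congr rfl fun _ _ => by ring
      rw [shift_esymm, ihn, ihn, esymmSeq_succ_succ x (M + 1)]
      push_cast
      ring

end Signed

section Nonneg

variable {R : Type*} [CommSemiring R] [PartialOrder R] [IsOrderedRing R] {x : ℕ → R}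

lemma esymmSeq_nonneg (hx : ∀ k, 0 ≤ x k) (m n : ℕ) : 0 ≤ esymmSeq x m n := by
  induction m generalizing n with
  | zero => exact zero_le_one
  | succ m ih => exact sum_nonneg fun k _ => mul_nonneg (hx k) (ih k)

lemma hsymmSeq_nonneg (hx : ∀ k, 0 ≤ x k) (m n : ℕ) : 0 ≤ hsymmSeq x m n := by
  induction m generalizing n with
  | zero => exact zero_le_one
  | succ m ih => exact sum_nonneg fun k _ => mul_nonneg (hx k) (ih (k + 1))

end Nonneg

noncomputable def zetaTerm (s : ℝ) (k : ℕ) : ℝ := 1 / ((k : ℝ) + 1) ^ s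

lemma zetaTerm_nonneg (s : ℝ) (k : ℕ) : 0 ≤ zetaTerm s k := by
  unfold zetaTerm
  positivity

lemma sum_Icc_one_eq_sum_range {M : Type*} [AddCommMonoid M] (f : ℕ → M) (n : ℕ) :
    ∑ k ∈ Icc 1 n, f k = ∑ k ∈ range n, f (k + 1) := by
  rw [range_eq_Ico, sum_Ico_add', zero_add, Ico_add_one_right_eq_Icc]

lemma mh_replicate (s : ℝ) (m n : ℕ) :
    mh (List.replicate m s) n = esymmSeq (zetaTerm s) m n := by
  induction m generalizing n with
  | zero => rfl
  | succ m ih =>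
    simp only [List.replicate_succ, mh, esymmSeq, ih, sum_Icc_one_eq_sum_range, zetaTerm]
    push_cast
    rfl

lemma mhStar_replicate (s : ℝ) (m n : ℕ) :
    mhStar (List.replicate m s) n = hsymmSeq (zetaTerm s) m n := by
  induction m generalizing n with
  | zero => rfl
  | succ m ih =>
    simp only [List.replicate_succ, mhStar, hsymmSeq, ih, sum_Icc_one_eq_sum_range, zetaTerm]
    push_cast
    rfl

lemma tendsto_psumSeq_zetaTerm {s : ℝ} {k : ℕ} (hsk : 1 < s * k) :
    Tendsto (psumSeq (zetaTerm s) k) atTop (𝓝 (rz (s * k))) := by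
  have hsum : Summable fun n : ℕ => 1 / ((n : ℝ) + 1) ^ (s * k) := by
    simpa using (summable_nat_add_iff 1).mpr (Real.summable_one_div_nat_rpow.mpr hsk)
  rw [rz]
  convert hsum.hasSum.tendsto_sum_nat using 2 with n
  refine sum_congr rfl fun j _ => ?_
  rw [zetaTerm, div_pow, one_pow, Real.rpow_mul_natCast (by positivity)]

lemma mzv_replicate_succ_eq_of_tendsto {s L : ℝ} {m : ℕ}
    (h : Tendsto (esymmSeq (zetaTerm s) (m + 1)) atTop (𝓝 L)) :
    mzv (List.replicate (m + 1) s) = L := by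
  simp only [List.replicate_succ, mzv, mh_replicate]
  refine HasSum.tsum_eq ((hasSum_iff_tendsto_nat_of_nonneg (fun k => ?_) L).mpr h)
  exact mul_nonneg (zetaTerm_nonneg s k) (esymmSeq_nonneg (zetaTerm_nonneg s) m k)

lemma mzvStar_replicate_succ_eq_of_tendsto {s L : ℝ} {m : ℕ}
    (h : Tendsto (hsymmSeq (zetaTerm s) (m + 1)) atTop (𝓝 L)) :
    mzvStar (List.replicate (m + 1) s) = L := by
  simp only [List.replicate_succ, mzvStar, mhStar_replicate]
  refine HasSum.tsum_eq ((hasSum_iff_tendsto_nat_of_nonneg (fun k => ?_) L).mpr h)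
  exact mul_nonneg (zetaTerm_nonneg s k) (hsymmSeq_nonneg (zetaTerm_nonneg s) m (k + 1))

section Limits

variable {s : ℝ}

lemma one_lt_mul_natCast_succ (hs : 1 < s) (j : ℕ) : 1 < s * (j + 1 : ℕ) :=
  one_lt_mul_of_lt_of_le hs (by norm_cast; omega)

lemma tendsto_hsymmSeq_succ (hs : 1 < s) (M : ℕ)
    (ih : ∀ i ≤ M,
      Tendsto (hsymmSeq (zetaTerm s) i) atTop (𝓝 (mzvStar (List.replicate i s)))) :
    Tendsto (hsymmSeq (zetaTerm s) (M + 1)) atTop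
      (𝓝 (1 / ((M + 1 : ℕ) : ℝ) * ∑ ij ∈ antidiagonal M,
        mzvStar (List.replicate ij.1 s) * rz (s * (ij.2 + 1 : ℕ)))) := by
  have hsum := tendsto_finsetSum (antidiagonal M) fun ij hij =>
    (ih ij.1 (HasAntidiagonal.antidiagonal.fst_le hij)).mul
      (tendsto_psumSeq_zetaTerm (one_lt_mul_natCast_succ hs ij.2))
  convert hsum.const_mul (1 / ((M + 1 : ℕ) : ℝ)) using 2 with n
  rw [← newton_hsymmSeq]
  field_simp

lemma tendsto_esymmSeq_succ (hs : 1 < s) (M : ℕ)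
    (ih : ∀ i ≤ M, Tendsto (esymmSeq (zetaTerm s) i) atTop (𝓝 (mzv (List.replicate i s)))) :
    Tendsto (esymmSeq (zetaTerm s) (M + 1)) atTop
      (𝓝 ((-1) ^ M / ((M + 1 : ℕ) : ℝ) * ∑ ij ∈ antidiagonal M,
        (-1) ^ ij.1 * mzv (List.replicate ij.1 s) * rz (s * (ij.2 + 1 : ℕ)))) := by
  have hsum := tendsto_finsetSum (antidiagonal M) fun ij hij =>
    ((ih ij.1 (HasAntidiagonal.antidiagonal.fst_le hij)).const_mul ((-1) ^ ij.1)).mul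
      (tendsto_psumSeq_zetaTerm (one_lt_mul_natCast_succ hs ij.2))
  convert hsum.const_mul ((-1) ^ M / ((M + 1 : ℕ) : ℝ)) using 2 with n
  rw [newton_esymmSeq, ← mul_assoc, div_mul_eq_mul_div, ← mul_assoc, ← pow_add, ← two_mul,
    pow_mul, neg_one_sq, one_pow, one_mul, div_self (by positivity), one_mul]

theorem tendsto_hsymmSeq_mzvStar (hs : 1 < s) (m : ℕ) :
    Tendsto (hsymmSeq (zetaTerm s) m) atTop (𝓝 (mzvStar (List.replicate m s))) := by
  induction m using Nat.strong_induction_on with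
  | _ m ih =>
    cases m with
    | zero => exact tendsto_const_nhds
    | succ M =>
      have hlim := tendsto_hsymmSeq_succ hs M fun i hi => ih i (Nat.lt_succ_of_le hi)
      rwa [mzvStar_replicate_succ_eq_of_tendsto hlim]

theorem tendsto_esymmSeq_mzv (hs : 1 < s) (m : ℕ) :
    Tendsto (esymmSeq (zetaTerm s) m) atTop (𝓝 (mzv (List.replicate m s))) := by
  induction m using Nat.strong_induction_on with
  | _ m ih =>
    cases m with
    | zero => exact tendsto_const_nhds
    | succ M =>
      have hlim := tendsto_esymmSeq_succ hs M fun i hi => ih i (Nat.lt_succ_of_le hi)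
      rwa [mzv_replicate_succ_eq_of_tendsto hlim]

end Limits

lemma sum_antidiagonal_mul_rz (f : ℕ → ℝ) (s : ℝ) (M : ℕ) :
    ∑ ij ∈ antidiagonal M, f ij.1 * rz (s * (ij.2 + 1 : ℕ)) =
      ∑ i ∈ range (M + 1), f i * rz (s * (M + 1 : ℕ) - s * i) := by
  rw [Nat.sum_antidiagonal_eq_sum_range_succ (fun i j => f i * rz (s * (j + 1 : ℕ)))]
  refine sum_congr rfl fun i hi => ?_
  congr 2
  push_cast [Nat.cast_sub (mem_range_succ_iff.mp hi)]
  ring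

theorem stmt_19 (p : ℝ) (hp : 1 < p) (m : ℕ) (hm : 1 ≤ m) :
    mzvStar (List.replicate m p)
        = (1 / (m : ℝ))
            * ∑ i ∈ Finset.range m, mzvStar (List.replicate i p) * rz (p * m - p * i)
    ∧ mzv (List.replicate m p)
        = ((-1 : ℝ) ^ (m - 1) / (m : ℝ))
            * ∑ i ∈ Finset.range m, (-1 : ℝ) ^ i * mzv (List.replicate i p) * rz (p * m - p * i) := by
  obtain ⟨M, rfl⟩ := Nat.exists_eq_add_of_le' hm
  constructor
  · rw [mzvStar_replicate_succ_eq_of_tendsto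
      (tendsto_hsymmSeq_succ hp M fun i _ => tendsto_hsymmSeq_mzvStar hp i),
      sum_antidiagonal_mul_rz (fun i => mzvStar (List.replicate i p))]
  · rw [mzv_replicate_succ_eq_of_tendsto
      (tendsto_esymmSeq_succ hp M fun i _ => tendsto_esymmSeq_mzv hp i),
      sum_antidiagonal_mul_rz (fun i => (-1) ^ i * mzv (List.replicate i p)), Nat.add_sub_cancel]
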